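/- arXiv:1808.00587 — 4 statements merged into one kernel-verified Lean document; each statement's English description precedes it below -/
import Mathlib

section
/- If ε', ε'' ∈ int(E) satisfy π(ε') = π(ε''), then v(ρ ε' + (1−ρ) ε'') = ρ v(ε') + (1−ρ) v(ε'') for every ρ ∈ [0,1]; that is, the optimal value function v is affine on each invariancy set {ε ∈ int(E) : π(ε) = π(ε̄)}. -/
open Matrix Set

noncomputable section

variable {n m : ℕ}

/-- Feasibility for the primal SDO problem `(P_ε)` (the feasible set does not depend on `ε`). -/
def PrimalFeasible (A : Fin m → Matrix (Fin n) (Fin n) ℝ) (b : Fin m → ℝ)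
    (X : Matrix (Fin n) (Fin n) ℝ) : Prop :=
  X.IsSymm ∧ (∀ i, ((A i) * X).trace = b i) ∧ X.PosSemidef

/-- Feasibility for the dual SDO problem `(D_ε)`. -/
def DualFeasible (C Cbar : Matrix (Fin n) (Fin n) ℝ)
    (A : Fin m → Matrix (Fin n) (Fin n) ℝ) (ε : ℝ)
    (y : Fin m → ℝ) (S : Matrix (Fin n) (Fin n) ℝ) : Prop :=
  S.IsSymm ∧ (∑ i, y i • A i) + S = C + ε • Cbar ∧ S.PosSemidef

/-- The optimal value function `v(ε)` of `(P_ε)`, with values in `EReal`. -/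
def vfun (C Cbar : Matrix (Fin n) (Fin n) ℝ) (A : Fin m → Matrix (Fin n) (Fin n) ℝ)
    (b : Fin m → ℝ) (ε : ℝ) : EReal :=
  sInf ((fun X => (((C + ε • Cbar) * X).trace : EReal)) '' {X | PrimalFeasible A b X})

/-- `E = {ε : v(ε) > -∞}`. -/
def Eset (C Cbar : Matrix (Fin n) (Fin n) ℝ) (A : Fin m → Matrix (Fin n) (Fin n) ℝ)
    (b : Fin m → ℝ) : Set ℝ :=
  {ε | ⊥ < vfun C Cbar A b ε}

/-- The primal optimal set `P*(ε)`. -/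
def PrimalOpt (C Cbar : Matrix (Fin n) (Fin n) ℝ) (A : Fin m → Matrix (Fin n) (Fin n) ℝ)
    (b : Fin m → ℝ) (ε : ℝ) : Set (Matrix (Fin n) (Fin n) ℝ) :=
  {X | PrimalFeasible A b X ∧ ∀ X', PrimalFeasible A b X' →
    ((C + ε • Cbar) * X).trace ≤ ((C + ε • Cbar) * X').trace}

/-- The dual optimal set `D*(ε)`. -/
def DualOpt (C Cbar : Matrix (Fin n) (Fin n) ℝ) (A : Fin m → Matrix (Fin n) (Fin n) ℝ)
    (b : Fin m → ℝ) (ε : ℝ) : Set ((Fin m → ℝ) × Matrix (Fin n) (Fin n) ℝ) :=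
  {p | DualFeasible C Cbar A ε p.1 p.2 ∧ ∀ y' S', DualFeasible C Cbar A ε y' S' →
    ∑ i, b i * y' i ≤ ∑ i, b i * p.1 i}

/-- A maximally complementary optimal solution: `X` lies in the relative interior of `P*(ε)`
and `(y, S)` in the relative interior of `D*(ε)`. -/
def MaxComp (C Cbar : Matrix (Fin n) (Fin n) ℝ) (A : Fin m → Matrix (Fin n) (Fin n) ℝ)
    (b : Fin m → ℝ) (ε : ℝ) (X : Matrix (Fin n) (Fin n) ℝ) (y : Fin m → ℝ)
    (S : Matrix (Fin n) (Fin n) ℝ) : Prop :=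
  X ∈ intrinsicInterior ℝ (PrimalOpt C Cbar A b ε) ∧
    (y, S) ∈ intrinsicInterior ℝ (DualOpt C Cbar A b ε)

/-- `π(ε) = π(ε')`: the optimal partitions at `ε` and `ε'` coincide, expressed through
maximally complementary solutions (`B = range X*`, `N = range S*`, `T` being determined
by `B` and `N`). -/
def SamePartition (C Cbar : Matrix (Fin n) (Fin n) ℝ) (A : Fin m → Matrix (Fin n) (Fin n) ℝ)
    (b : Fin m → ℝ) (ε ε' : ℝ) : Prop :=
  ∃ X y S X' y' S', MaxComp C Cbar A b ε X y S ∧ MaxComp C Cbar A b ε' X' y' S' ∧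
    LinearMap.range X.mulVecLin = LinearMap.range X'.mulVecLin ∧
    LinearMap.range S.mulVecLin = LinearMap.range S'.mulVecLin

/-- The standing assumptions: symmetric data, linearly independent constraint matrices and
the interior point condition at `ε = 0`. -/
def StandingAssumptions (C Cbar : Matrix (Fin n) (Fin n) ℝ)
    (A : Fin m → Matrix (Fin n) (Fin n) ℝ) (b : Fin m → ℝ) : Prop :=
  C.IsSymm ∧ Cbar.IsSymm ∧ (∀ i, (A i).IsSymm) ∧ LinearIndependent ℝ A ∧
    ∃ X y S, PrimalFeasible A b X ∧ X.PosDef ∧ DualFeasible C Cbar A 0 y S ∧ S.PosDef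

/-- The invariancy set of `ε̄`. -/
def InvSet (C Cbar : Matrix (Fin n) (Fin n) ℝ) (A : Fin m → Matrix (Fin n) (Fin n) ℝ)
    (b : Fin m → ℝ) (εbar : ℝ) : Set ℝ :=
  {ε | ε ∈ interior (Eset C Cbar A b) ∧ SamePartition C Cbar A b ε εbar}

/-- `dim B(ε) = dim B(ε')` and `dim N(ε) = dim N(ε')`, expressed through maximally
complementary solutions. -/
def DimsMatch (C Cbar : Matrix (Fin n) (Fin n) ℝ) (A : Fin m → Matrix (Fin n) (Fin n) ℝ)
    (b : Fin m → ℝ) (ε ε' : ℝ) : Prop :=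
  ∀ X y S X' y' S', MaxComp C Cbar A b ε X y S → MaxComp C Cbar A b ε' X' y' S' →
    Module.finrank ℝ (LinearMap.range X.mulVecLin) =
        Module.finrank ℝ (LinearMap.range X'.mulVecLin) ∧
      Module.finrank ℝ (LinearMap.range S.mulVecLin) =
        Module.finrank ℝ (LinearMap.range S'.mulVecLin)

/-- A transition point: a singleton invariancy set such that every neighborhood contains a
parameter at which `dim B` or `dim N` differs. -/
def IsTransitionPoint (C Cbar : Matrix (Fin n) (Fin n) ℝ) (A : Fin m → Matrix (Fin n) (Fin n) ℝ)
    (b : Fin m → ℝ) (εbar : ℝ) : Prop :=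
  εbar ∈ interior (Eset C Cbar A b) ∧
    (∀ ε ∈ interior (Eset C Cbar A b), ε ≠ εbar → ¬ SamePartition C Cbar A b ε εbar) ∧
    ∀ ξ : ℝ, 0 < ξ → ∃ ε ∈ Set.Ioo (εbar - ξ) (εbar + ξ) ∩ interior (Eset C Cbar A b),
      ¬ DimsMatch C Cbar A b ε εbar

/-- Existence of a strictly complementary optimal solution at `ε`. -/
def HasStrictComp (C Cbar : Matrix (Fin n) (Fin n) ℝ) (A : Fin m → Matrix (Fin n) (Fin n) ℝ)
    (b : Fin m → ℝ) (ε : ℝ) : Prop :=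
  ∃ X y S, X ∈ PrimalOpt C Cbar A b ε ∧ (y, S) ∈ DualOpt C Cbar A b ε ∧ (X + S).PosDef

/-- Nonsingularity of the Jacobian `J(X, y, S)` of the optimality system, as a linear map on
`S^n × ℝ^m × S^n`: only the trivial symmetric triple is mapped to zero. -/
def JNonsingular (A : Fin m → Matrix (Fin n) (Fin n) ℝ)
    (X S : Matrix (Fin n) (Fin n) ℝ) : Prop :=
  ∀ (DX DS : Matrix (Fin n) (Fin n) ℝ) (Dy : Fin m → ℝ), DX.IsSymm → DS.IsSymm →
    (∀ i, ((A i) * DX).trace = 0) → ((∑ i, Dy i • A i) + DS = 0) →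
    (DX * S + S * DX + X * DS + DS * X = 0) → DX = 0 ∧ Dy = 0 ∧ DS = 0

/-- Primal nondegeneracy of a primal feasible `X`. -/
def PrimalNondeg (A : Fin m → Matrix (Fin n) (Fin n) ℝ)
    (X : Matrix (Fin n) (Fin n) ℝ) : Prop :=
  ∃ (r : ℕ) (M₁ : Matrix (Fin n) (Fin r) ℝ) (M₂ : Matrix (Fin n) (Fin (n - r)) ℝ),
    M₁ᵀ * M₁ = 1 ∧ M₂ᵀ * M₂ = 1 ∧ M₁ᵀ * M₂ = 0 ∧
    LinearMap.range M₁.mulVecLin = LinearMap.range X.mulVecLin ∧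
    LinearIndependent ℝ (fun i =>
      Matrix.fromBlocks (M₁ᵀ * (A i) * M₁) (M₁ᵀ * (A i) * M₂) (M₂ᵀ * (A i) * M₁) 0)

/-- Dual nondegeneracy of a dual feasible `(y, S)` (the condition involves only `S`). -/
def DualNondeg (A : Fin m → Matrix (Fin n) (Fin n) ℝ)
    (S : Matrix (Fin n) (Fin n) ℝ) : Prop :=
  ∃ (k : ℕ) (N₁ : Matrix (Fin n) (Fin k) ℝ),
    N₁ᵀ * N₁ = 1 ∧ LinearMap.range N₁.mulVecLin = LinearMap.ker S.mulVecLin ∧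
    ∀ W : Matrix (Fin k) (Fin k) ℝ, W.IsSymm →
      W ∈ Submodule.span ℝ (Set.range fun i => N₁ᵀ * (A i) * N₁)

/-- A central solution with parameter `μ` for the problems `(P_ε)` and `(D_ε)`. -/
def CentralSol (C Cbar : Matrix (Fin n) (Fin n) ℝ) (A : Fin m → Matrix (Fin n) (Fin n) ℝ)
    (b : Fin m → ℝ) (ε μ : ℝ) (X : Matrix (Fin n) (Fin n) ℝ) (y : Fin m → ℝ)
    (S : Matrix (Fin n) (Fin n) ℝ) : Prop :=
  PrimalFeasible A b X ∧ DualFeasible C Cbar A ε y S ∧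
    X * S = μ • (1 : Matrix (Fin n) (Fin n) ℝ)

/-- The Frobenius norm of a matrix. -/
def frobNorm {α β : Type*} [Fintype α] [Fintype β] (M : Matrix α β ℝ) : ℝ :=
  Real.sqrt (∑ i, ∑ j, (M i j) ^ 2)

/-- The spectral norm (induced 2-norm) of a square matrix. -/
def specNorm {N : ℕ} (M : Matrix (Fin N) (Fin N) ℝ) : ℝ :=
  ‖LinearMap.toContinuousLinearMap (Matrix.toEuclideanLin M)‖

/-- The smallest eigenvalue of a symmetric matrix, via the Rayleigh quotient. -/
def lamMin {k : ℕ} (M : Matrix (Fin k) (Fin k) ℝ) : ℝ :=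
  sInf {r : ℝ | ∃ x : Fin k → ℝ, (∑ i, (x i) ^ 2) = 1 ∧ r = x ⬝ᵥ M.mulVec x}

/-- `θ^μ`: the operator norm of the inverse of the Jacobian `J(X, y, S)` on
`S^n × ℝ^m × S^n`, characterized as the least constant `t ≥ 0` with
`‖(ΔX, Δy, ΔS)‖ ≤ t * ‖J(X,y,S)(ΔX, Δy, ΔS)‖` for all symmetric `ΔX`, `ΔS`. -/
def thetaMu (A : Fin m → Matrix (Fin n) (Fin n) ℝ)
    (X S : Matrix (Fin n) (Fin n) ℝ) : ℝ :=
  sInf {t : ℝ | 0 ≤ t ∧ ∀ (DX DS : Matrix (Fin n) (Fin n) ℝ) (Dy : Fin m → ℝ),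
    DX.IsSymm → DS.IsSymm →
    Real.sqrt (frobNorm DX ^ 2 + (∑ i, (Dy i) ^ 2) + frobNorm DS ^ 2) ≤
      t * Real.sqrt ((∑ i, (((A i) * DX).trace) ^ 2) +
        frobNorm ((∑ i, Dy i • A i) + DS) ^ 2 +
        frobNorm ((1 / 2 : ℝ) • (DX * S + S * DX + X * DS + DS * X)) ^ 2)}

/-- A nonlinearity interval: a non-singleton open subinterval of `int(E)`, of maximal length,
on which `dim B(·)` and `dim N(·)` are constant while the optimal partition `π(·)` varies. -/
def IsNonlinearityInterval (C Cbar : Matrix (Fin n) (Fin n) ℝ)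
    (A : Fin m → Matrix (Fin n) (Fin n) ℝ) (b : Fin m → ℝ) (I : Set ℝ) : Prop :=
  I ⊆ interior (Eset C Cbar A b) ∧ IsOpen I ∧ I.OrdConnected ∧
    (∃ a ∈ I, ∃ c ∈ I, a ≠ c) ∧
    (∀ ε ∈ I, ∀ ε' ∈ I, DimsMatch C Cbar A b ε ε') ∧
    ¬ (∀ ε ∈ I, ∀ ε' ∈ I, SamePartition C Cbar A b ε ε') ∧
    ∀ I' : Set ℝ, I ⊆ I' → I' ⊆ interior (Eset C Cbar A b) → IsOpen I' → I'.OrdConnected →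
      (∀ ε ∈ I', ∀ ε' ∈ I', DimsMatch C Cbar A b ε ε') → I' = I

end

/-!
Strong duality holds at every `ε`: separating the origin from the open convex set of
(constraint residual, objective excess) pairs of positive definite matrices yields a dual
solution whose objective reaches any lower bound of the primal objective; the strictly
feasible primal point forces the separating functional to be nonvertical. Hence every optimal
primal-dual pair is complementary, `S * X = 0`.

If `π(ε') = π(ε'')`, a maximally complementary `X'` at `ε'` has the same range as `X''` at
`ε''`, so `S'' * X' = 0` as well. Then `X'` is optimal at `ε''`, and also at every
`ρ ε' + (1 - ρ) ε''`, certified by the convex combination of the dual solutions. The objective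
at the fixed `X'` is affine in `ε`, and so is `v` on `[ε', ε'']`.
-/

open Filter Topology
open scoped ComplexOrder MatrixOrder

theorem le_of_forall_pos_le_add_mul {a b c : ℝ} (h : ∀ δ > 0, a ≤ b + δ * c) :
    a ≤ b := by
  have hlim : Tendsto (fun δ => b + δ * c) (𝓝[>] 0) (𝓝 b) := by
    refine ((?_ : Continuous fun δ : ℝ => b + δ * c).tendsto' 0 b (by simp)).mono_left
      nhdsWithin_le_nhds
    fun_prop
  exact ge_of_tendsto hlim (eventually_nhdsWithin_of_forall h)

namespace Matrix

variable {n ι 𝕜 : Type*}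

theorem PosSemidef.exists_eq_conjTranspose_mul_self [Fintype n] [RCLike 𝕜]
    {A : Matrix n n 𝕜} (hA : A.PosSemidef) : ∃ B : Matrix n n 𝕜, A = Bᴴ * B := by
  classical
  exact ⟨CFC.sqrt A, by
    rw [(nonneg_iff_posSemidef.mp (CFC.sqrt_nonneg A)).isHermitian.eq,
      CFC.sqrt_mul_sqrt_self A hA.nonneg]⟩

theorem PosSemidef.trace_mul_nonneg [Fintype n] [RCLike 𝕜] {S X : Matrix n n 𝕜}
    (hS : S.PosSemidef) (hX : X.PosSemidef) : 0 ≤ (S * X).trace := by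
  obtain ⟨B, rfl⟩ := hX.exists_eq_conjTranspose_mul_self
  rw [← Matrix.mul_assoc, trace_mul_comm]
  simpa [Matrix.mul_assoc] using (hS.mul_mul_conjTranspose_same B).trace_nonneg

theorem PosSemidef.mul_eq_zero_of_trace_mul_eq_zero [Fintype n] [RCLike 𝕜]
    {S X : Matrix n n 𝕜} (hS : S.PosSemidef) (hX : X.PosSemidef) (h : (S * X).trace = 0) :
    S * X = 0 := by
  obtain ⟨B, rfl⟩ := hX.exists_eq_conjTranspose_mul_self
  obtain ⟨D, rfl⟩ := hS.exists_eq_conjTranspose_mul_self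
  have hDB : D * Bᴴ = 0 := by
    rw [← trace_conjTranspose_mul_self_eq_zero_iff, ← h, conjTranspose_mul,
      conjTranspose_conjTranspose, trace_mul_comm, ← Matrix.mul_assoc, trace_mul_comm]
    simp only [Matrix.mul_assoc]
  rw [Matrix.mul_assoc, ← Matrix.mul_assoc D, hDB, Matrix.zero_mul, Matrix.mul_zero]

theorem mul_eq_zero_of_mul_eq_zero_of_range_le {R : Type*} [CommSemiring R] [Fintype n]
    {S X Y : Matrix n n R} (hY : S * Y = 0)
    (h : LinearMap.range X.mulVecLin ≤ LinearMap.range Y.mulVecLin) : S * X = 0 := by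
  classical
  refine Matrix.toLin'.injective (LinearMap.ext fun v => ?_)
  obtain ⟨w, hw⟩ := h ⟨v, rfl⟩
  simp only [toLin'_apply, zero_mulVec, ← mulVec_mulVec]
  rw [← mulVecLin_apply X v, ← hw, mulVecLin_apply, mulVec_mulVec, hY, zero_mulVec]

theorem PosDef.eventually_posDef [Fintype n] {X : Matrix n n ℝ} (hX : X.PosDef) :
    ∀ᶠ Y in 𝓝 X, Y.IsHermitian → Y.PosDef := by
  have hcont : Continuous fun p : Matrix n n ℝ × (n → ℝ) => p.2 ⬝ᵥ p.1 *ᵥ p.2 :=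
    continuous_snd.dotProduct (continuous_fst.matrix_mulVec continuous_snd)
  have hsphere :
      ∀ᶠ Y in 𝓝 X, ∀ u ∈ Metric.sphere (0 : n → ℝ) 1, 0 < u ⬝ᵥ Y *ᵥ u := by
    refine (isCompact_sphere 0 1).eventually_forall_of_forall_eventually fun u hu => ?_
    exact continuousAt_const.eventually_lt hcont.continuousAt
      (by simpa using hX.dotProduct_mulVec_pos (ne_zero_of_mem_unit_sphere ⟨u, hu⟩))
  filter_upwards [hsphere] with Y hY hYh
  refine .of_dotProduct_mulVec_pos hYh fun x hx => ?_
  have hxn : 0 < ‖x‖ := norm_pos_iff.mpr hx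
  have := hY (‖x‖⁻¹ • x) (by simp [norm_smul, hxn.ne'])
  simp only [mulVec_smul, dotProduct_smul, smul_dotProduct, smul_eq_mul] at this
  rw [star_trivial]
  exact pos_of_mul_pos_right (pos_of_mul_pos_right this (by positivity)) (by positivity)

theorem convex_setOf_posDef [Fintype n] : Convex ℝ {X : Matrix n n ℝ | X.PosDef} := by
  intro X hX Y hY a b ha hb hab
  refine .of_dotProduct_mulVec_pos ?_ fun x hx => ?_
  · rw [isHermitian_iff_isSymm]
    exact ((isHermitian_iff_isSymm.mp hX.isHermitian).smul a).add
      ((isHermitian_iff_isSymm.mp hY.isHermitian).smul b)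
  · simpa [add_mulVec, smul_mulVec, dotProduct_add] using
      convex_Ioi (0 : ℝ) (hX.dotProduct_mulVec_pos hx) (hY.dotProduct_mulVec_pos hx) ha hb hab

theorem posSemidef_and_le_of_forall_posDef [Fintype n] {S : Matrix n n ℝ} {V β : ℝ}
    (hS : S.IsHermitian) (h : ∀ X : Matrix n n ℝ, X.PosDef → V ≤ β + (S * X).trace) :
    S.PosSemidef ∧ V ≤ β := by
  classical
  have htr : ∀ X : Matrix n n ℝ, X.PosDef → 0 ≤ (S * X).trace := fun X hX =>
    le_of_forall_pos_le_add_mul (c := β - V) fun δ hδ => by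
      have := h (δ⁻¹ • X) (hX.smul (inv_pos.mpr hδ))
      rw [Matrix.mul_smul, trace_smul, smul_eq_mul] at this
      have := mul_le_mul_of_nonneg_left this hδ.le
      rw [mul_add, mul_inv_cancel_left₀ hδ.ne'] at this
      linarith
  refine ⟨.of_dotProduct_mulVec_nonneg hS fun v => ?_, ?_⟩
  · refine le_of_forall_pos_le_add_mul (c := S.trace) fun δ hδ => ?_
    have := htr (vecMulVec v v + δ • 1) (by
      simpa using PosDef.posSemidef_add (posSemidef_vecMulVec_self_star v) (PosDef.one.smul hδ))
    simpa [Matrix.mul_add, mul_vecMulVec, dotProduct_comm] using this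
  · refine le_of_forall_pos_le_add_mul (c := S.trace) fun δ hδ => ?_
    simpa using h (δ • 1) (PosDef.one.smul hδ)

theorem IsSymm.sum_smul [Fintype ι] {A : ι → Matrix n n ℝ} (hA : ∀ i, (A i).IsSymm)
    (y : ι → ℝ) : (∑ i, y i • A i).IsSymm := by
  simp [IsSymm, transpose_sum, (hA _).eq]

theorem trace_sum_smul_mul [Fintype n] [Fintype ι] (A : ι → Matrix n n ℝ) (y : ι → ℝ)
    (X : Matrix n n ℝ) : ((∑ i, y i • A i) * X).trace = ∑ i, y i * (A i * X).trace := by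
  simp [Finset.sum_mul, trace_sum]

end Matrix

section SlaterDuality

variable {n ι : Type*} [Fintype n]

/-- `(0, 0)` lies outside this set exactly when `V` bounds `⟨c, X⟩` from below on the strictly
feasible `X`. -/
def residualEpigraph (A : ι → Matrix n n ℝ) (b : ι → ℝ) (c : Matrix n n ℝ) (V : ℝ) :
    Set ((ι → ℝ) × ℝ) :=
  {p | ∃ X : Matrix n n ℝ, X.PosDef ∧ (∀ i, (A i * X).trace - b i = p.1 i) ∧
    (c * X).trace - V < p.2}

theorem convex_residualEpigraph (A : ι → Matrix n n ℝ) (b : ι → ℝ) (c : Matrix n n ℝ)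
    (V : ℝ) :
    Convex ℝ (residualEpigraph A b c V) := by
  rintro p ⟨X, hX, hXp, hXc⟩ q ⟨Y, hY, hYq, hYc⟩ s t hs ht hst
  refine ⟨s • X + t • Y, convex_setOf_posDef hX hY hs ht hst, fun i => ?_, ?_⟩
  · simp only [Prod.fst_add, Prod.smul_fst, Pi.add_apply, Pi.smul_apply, smul_eq_mul, ← hXp,
      ← hYq, Matrix.mul_add, Matrix.mul_smul, trace_add, trace_smul]
    linear_combination (b i) * hst
  · have := convex_Ioi (0 : ℝ) (sub_pos.mpr hXc) (sub_pos.mpr hYc) hs ht hst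
    simp only [Set.mem_Ioi, smul_eq_mul] at this
    simp only [Prod.snd_add, Prod.smul_snd, smul_eq_mul, Matrix.mul_add, Matrix.mul_smul,
      trace_add, trace_smul]
    linear_combination this + V * hst

variable [Fintype ι]

theorem exists_isSymm_rightInverse_of_linearIndependent {A : ι → Matrix n n ℝ}
    (hA : ∀ i, (A i).IsSymm) (hli : LinearIndependent ℝ A) :
    ∃ e : (ι → ℝ) →ₗ[ℝ] Matrix n n ℝ, ∀ u, (e u).IsSymm ∧ ∀ i, (A i * e u).trace = u i := by
  let T : (ι → ℝ) →ₗ[ℝ] ι → ℝ :=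
    (LinearMap.pi fun i => traceLinearMap n ℝ ℝ ∘ₗ LinearMap.mulLeft ℝ (A i)) ∘ₗ
      Fintype.linearCombination ℝ A
  have hinj : Function.Injective T := by
    rw [← LinearMap.ker_eq_bot, LinearMap.ker_eq_bot']
    intro y hy
    have hM : ((∑ j, y j • A j)ᴴ * ∑ j, y j • A j).trace = 0 := by
      rw [conjTranspose_eq_transpose_of_trivial, (IsSymm.sum_smul hA y).eq, trace_sum_smul_mul]
      have hyi : ∀ i, ∑ j, y j * (A i * A j).trace = 0 := fun i => by
        simpa [T, Fintype.linearCombination_apply] using congr_fun hy i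
      simp [Matrix.mul_sum, trace_sum, hyi]
    funext i
    exact Fintype.linearIndependent_iff.mp hli y (trace_conjTranspose_mul_self_eq_zero_iff.mp hM) i
  obtain ⟨g, hg⟩ := T.exists_rightInverse_of_surjective
    (LinearMap.range_eq_top.mpr (LinearMap.injective_iff_surjective.mp hinj))
  refine ⟨Fintype.linearCombination ℝ A ∘ₗ g, fun u => ⟨?_, fun i => ?_⟩⟩
  · simpa [Fintype.linearCombination_apply] using IsSymm.sum_smul hA (g u)
  · simpa [T] using congr_fun (LinearMap.congr_fun hg u) i

theorem isOpen_residualEpigraph {A : ι → Matrix n n ℝ} (hA : ∀ i, (A i).IsSymm)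
    (hli : LinearIndependent ℝ A) (b : ι → ℝ) (c : Matrix n n ℝ) (V : ℝ) :
    IsOpen (residualEpigraph A b c V) := by
  obtain ⟨e, he⟩ := exists_isSymm_rightInverse_of_linearIndependent hA hli
  rw [isOpen_iff_mem_nhds]
  rintro ⟨u, s⟩ ⟨X, hX, hXu, hXc⟩
  let φ : (ι → ℝ) × ℝ → Matrix n n ℝ := fun q => X + e (q.1 - u)
  have hφ : Continuous φ := by
    have := e.continuous_of_finiteDimensional
    fun_prop
  have hφX : φ (u, s) = X := by simp [φ]
  have hpd : ∀ᶠ q in 𝓝 (u, s), (φ q).PosDef := by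
    filter_upwards [hφ.continuousAt.eventually (hφX ▸ hX.eventually_posDef)] with q hq
    exact hq (isHermitian_iff_isSymm.mpr
      ((isHermitian_iff_isSymm.mp hX.isHermitian).add (he _).1))
  have hobj : ∀ᶠ q in 𝓝 (u, s), (c * φ q).trace - V < q.2 :=
    (by fun_prop : Continuous fun q => (c * φ q).trace - V).continuousAt.eventually_lt
      continuous_snd.continuousAt (by simpa [hφX] using hXc)
  filter_upwards [hpd, hobj] with q hq hqc
  refine ⟨φ q, hq, fun i => ?_, hqc⟩
  have hXi := hXu i
  simp only [φ, Matrix.mul_add, trace_add, (he _).2, Pi.sub_apply] at hXi ⊢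
  linarith

theorem strongDual_apply_pi_prod [DecidableEq ι] (f : StrongDual ℝ ((ι → ℝ) × ℝ))
    (u : ι → ℝ) (t : ℝ) : f (u, t) = ∑ i, u i * f (Pi.single i 1, 0) + t * f (0, 1) := by
  have : (u, t) =
      ∑ i, u i • ((Pi.single i 1 : ι → ℝ), (0 : ℝ)) + t • ((0 : ι → ℝ), (1 : ℝ)) := by
    ext <;> simp [Prod.fst_sum, Prod.snd_sum, Finset.sum_apply, Pi.single_apply]
  rw [this, map_add, map_sum]
  simp_rw [map_smul, smul_eq_mul]

theorem exists_forall_posDef_le_add_trace_mul {A : ι → Matrix n n ℝ} (hA : ∀ i, (A i).IsSymm)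
    (hli : LinearIndependent ℝ A) {b : ι → ℝ} {c X₀ : Matrix n n ℝ} (hX₀ : X₀.PosDef)
    (hX₀b : ∀ i, (A i * X₀).trace = b i) {V : ℝ}
    (hV : ∀ X : Matrix n n ℝ, X.PosDef → (∀ i, (A i * X).trace = b i) → V ≤ (c * X).trace) :
    ∃ y : ι → ℝ, ∀ X : Matrix n n ℝ, X.PosDef →
      V ≤ ∑ i, b i * y i + ((c - ∑ i, y i • A i) * X).trace := by
  classical
  have hV0 : ((0 : ι → ℝ), (0 : ℝ)) ∉ residualEpigraph A b c V := by
    rintro ⟨X, hX, hXb, hXc⟩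
    exact hXc.not_ge (sub_nonneg.mpr (hV X hX fun i => sub_eq_zero.mp (hXb i)))
  obtain ⟨f, hf⟩ := geometric_hahn_banach_open_point (convex_residualEpigraph A b c V)
    (isOpen_residualEpigraph hA hli b c V) hV0
  rw [Prod.mk_zero_zero, map_zero] at hf
  have hsplit := strongDual_apply_pi_prod f
  set μ := f (0, 1)
  -- `X₀` puts `(0, t)` into the set for every large `t`, so the functional is not vertical.
  have hμ : μ < 0 := by
    have := hf (0, (c * X₀).trace - V + 1) ⟨X₀, hX₀, fun i => by simp [hX₀b], by simp⟩
    rw [hsplit] at this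
    simp only [Pi.zero_apply, zero_mul, Finset.sum_const_zero, zero_add] at this
    exact neg_of_mul_neg_right this (by linarith [hV X₀ hX₀ hX₀b])
  set g : ι → ℝ := fun i => f (Pi.single i 1, 0)
  refine ⟨fun i => g i / -μ, fun X hX => le_of_forall_pos_le_add fun s hs => ?_⟩
  have hsep := hf (_, (c * X).trace - V + s) ⟨X, hX, fun i => rfl, lt_add_of_pos_right _ hs⟩
  rw [hsplit] at hsep
  have hdiv := div_pos_of_neg_of_neg hsep hμ
  rw [add_div, mul_div_cancel_right₀ _ hμ.ne] at hdiv
  have hsum : ∑ i, b i * (g i / -μ) - ∑ i, g i / -μ * (A i * X).trace =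
      (∑ i, ((A i * X).trace - b i) * g i) / μ := by
    rw [Finset.sum_div, ← Finset.sum_sub_distrib]
    refine Finset.sum_congr rfl fun i _ => ?_
    field_simp
    ring
  rw [sub_mul, trace_sub, trace_sum_smul_mul]
  linarith

theorem exists_dual_ge_of_slater {A : ι → Matrix n n ℝ} {c : Matrix n n ℝ}
    (hc : c.IsSymm) (hA : ∀ i, (A i).IsSymm) (hli : LinearIndependent ℝ A) {b : ι → ℝ}
    {X₀ : Matrix n n ℝ} (hX₀ : X₀.PosDef) (hX₀b : ∀ i, (A i * X₀).trace = b i)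
    {V : ℝ}
    (hV : ∀ X : Matrix n n ℝ, X.PosDef → (∀ i, (A i * X).trace = b i) → V ≤ (c * X).trace) :
    ∃ (y : ι → ℝ) (S : Matrix n n ℝ), S.PosSemidef ∧ ∑ i, y i • A i + S = c ∧
      V ≤ ∑ i, b i * y i := by
  obtain ⟨y, hy⟩ := exists_forall_posDef_le_add_trace_mul hA hli hX₀ hX₀b hV
  obtain ⟨hS, hVy⟩ := posSemidef_and_le_of_forall_posDef
    (isHermitian_iff_isSymm.mpr (hc.sub (IsSymm.sum_smul hA y))) hy
  exact ⟨y, _, hS, add_sub_cancel _ _, hVy⟩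

theorem trace_mul_eq_sum_add_trace_mul {A : ι → Matrix n n ℝ} {b y : ι → ℝ}
    {c S X : Matrix n n ℝ} (hX : ∀ i, (A i * X).trace = b i)
    (hS : ∑ i, y i • A i + S = c) :
    (c * X).trace = ∑ i, b i * y i + (S * X).trace := by
  simp [← hS, Matrix.add_mul, trace_sum_smul_mul, hX, mul_comm]

end SlaterDuality

section SemidefiniteProgram

variable {n m : ℕ} {C Cbar : Matrix (Fin n) (Fin n) ℝ}
  {A : Fin m → Matrix (Fin n) (Fin n) ℝ} {b : Fin m → ℝ}

theorem vfun_eq_of_mem_primalOpt {ε : ℝ} {X : Matrix (Fin n) (Fin n) ℝ}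
    (hX : X ∈ PrimalOpt C Cbar A b ε) :
    vfun C Cbar A b ε = (((C + ε • Cbar) * X).trace : EReal) :=
  IsLeast.csInf_eq ⟨⟨X, hX.1, rfl⟩, by
    rintro _ ⟨X', hX', rfl⟩
    exact EReal.coe_le_coe_iff.mpr (hX.2 X' hX')⟩

theorem mem_primalOpt_of_trace_mul_eq_zero {ε : ℝ} {X S : Matrix (Fin n) (Fin n) ℝ}
    {y : Fin m → ℝ} (hX : PrimalFeasible A b X) (hyS : DualFeasible C Cbar A ε y S)
    (h : (S * X).trace = 0) : X ∈ PrimalOpt C Cbar A b ε := by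
  refine ⟨hX, fun X' hX' => ?_⟩
  rw [trace_mul_eq_sum_add_trace_mul hX.2.1 hyS.2.1,
    trace_mul_eq_sum_add_trace_mul hX'.2.1 hyS.2.1, h, add_zero]
  exact le_add_of_nonneg_right (hyS.2.2.trace_mul_nonneg hX'.2.2)

theorem DualFeasible.convexComb {ε' ε'' s t : ℝ} {y' y'' : Fin m → ℝ}
    {S' S'' : Matrix (Fin n) (Fin n) ℝ} (h' : DualFeasible C Cbar A ε' y' S')
    (h'' : DualFeasible C Cbar A ε'' y'' S'') (hs : 0 ≤ s) (ht : 0 ≤ t) (hst : s + t = 1) :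
    DualFeasible C Cbar A (s * ε' + t * ε'') (s • y' + t • y'') (s • S' + t • S'') := by
  refine ⟨(h'.1.smul s).add (h''.1.smul t), ?_, (h'.2.2.smul hs).add (h''.2.2.smul ht)⟩
  calc ∑ i, (s • y' + t • y'') i • A i + (s • S' + t • S'')
      = s • (∑ i, y' i • A i + S') + t • (∑ i, y'' i • A i + S'') := by
        simp only [Pi.add_apply, Pi.smul_apply, smul_eq_mul, add_smul, mul_smul,
          Finset.sum_add_distrib, ← Finset.smul_sum, smul_add]
        abel
    _ = C + (s * ε' + t * ε'') • Cbar := by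
        rw [h'.2.1, h''.2.1, smul_add, smul_add, add_add_add_comm, ← add_smul, hst, one_smul,
          smul_smul, smul_smul, ← add_smul]

theorem mul_eq_zero_of_mem_primalOpt_of_mem_dualOpt (hSA : StandingAssumptions C Cbar A b)
    {ε : ℝ} {X S : Matrix (Fin n) (Fin n) ℝ} {y : Fin m → ℝ}
    (hX : X ∈ PrimalOpt C Cbar A b ε) (hyS : (y, S) ∈ DualOpt C Cbar A b ε) : S * X = 0 := by
  obtain ⟨hC, hCbar, hA, hli, X₀, -, -, hX₀, hX₀pd, -, -⟩ := hSA
  obtain ⟨y₀, S₀, hS₀, hyS₀, hV⟩ :=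
    exists_dual_ge_of_slater (hC.add (hCbar.smul ε)) hA hli hX₀pd hX₀.2.1 fun X' hX' hX'b =>
      hX.2 X' ⟨isHermitian_iff_isSymm.mp hX'.isHermitian, hX'b, hX'.posSemidef⟩
  have hgap := trace_mul_eq_sum_add_trace_mul hX.1.2.1 hyS.1.2.1
  have hdual := hyS.2 y₀ S₀ ⟨isHermitian_iff_isSymm.mp hS₀.isHermitian, hyS₀, hS₀⟩
  exact hyS.1.2.2.mul_eq_zero_of_trace_mul_eq_zero hX.1.2.2
    (le_antisymm (by linarith) (hyS.1.2.2.trace_mul_nonneg hX.1.2.2))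

end SemidefiniteProgram

theorem stmt2_general {n m : ℕ} (C Cbar : Matrix (Fin n) (Fin n) ℝ)
    (A : Fin m → Matrix (Fin n) (Fin n) ℝ) (b : Fin m → ℝ)
    (hSA : StandingAssumptions C Cbar A b)
    (ε' ε'' : ℝ)
    (hsp : SamePartition C Cbar A b ε' ε'')
    (ρ : ℝ) (hρ : ρ ∈ Set.Icc (0 : ℝ) 1) :
    vfun C Cbar A b (ρ * ε' + (1 - ρ) * ε'') =
      (ρ : EReal) * vfun C Cbar A b ε' + ((1 - ρ : ℝ) : EReal) * vfun C Cbar A b ε'' := by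
  obtain ⟨X', y', S', X'', y'', S'', hmc', hmc'', hrange, -⟩ := hsp
  have hX' : X' ∈ PrimalOpt C Cbar A b ε' := intrinsicInterior_subset hmc'.1
  have hD' : (y', S') ∈ DualOpt C Cbar A b ε' := intrinsicInterior_subset hmc'.2
  have hS'X' : S' * X' = 0 := mul_eq_zero_of_mem_primalOpt_of_mem_dualOpt hSA hX' hD'
  have hD'' : (y'', S'') ∈ DualOpt C Cbar A b ε'' := intrinsicInterior_subset hmc''.2
  have hS''X' : S'' * X' = 0 := mul_eq_zero_of_mul_eq_zero_of_range_le
    (mul_eq_zero_of_mem_primalOpt_of_mem_dualOpt hSA (intrinsicInterior_subset hmc''.1) hD'')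
    hrange.le
  have hX'ε'' : X' ∈ PrimalOpt C Cbar A b ε'' :=
    mem_primalOpt_of_trace_mul_eq_zero hX'.1 hD''.1 (by rw [hS''X', trace_zero])
  have hX'ρ : X' ∈ PrimalOpt C Cbar A b (ρ * ε' + (1 - ρ) * ε'') :=
    mem_primalOpt_of_trace_mul_eq_zero hX'.1
      (hD'.1.convexComb hD''.1 hρ.1 (sub_nonneg.mpr hρ.2) (add_sub_cancel ρ 1))
      (by simp [Matrix.add_mul, hS'X', hS''X'])
  rw [vfun_eq_of_mem_primalOpt hX'ρ, vfun_eq_of_mem_primalOpt hX',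
    vfun_eq_of_mem_primalOpt hX'ε'', ← EReal.coe_mul, ← EReal.coe_mul, ← EReal.coe_add,
    EReal.coe_eq_coe_iff]
  simp only [Matrix.add_mul, Matrix.smul_mul, trace_add, trace_smul, smul_eq_mul]
  ring

/-- the optimal value function is affine on each invariancy set. -/
theorem stmt2 {n m : ℕ} (C Cbar : Matrix (Fin n) (Fin n) ℝ)
    (A : Fin m → Matrix (Fin n) (Fin n) ℝ) (b : Fin m → ℝ)
    (hSA : StandingAssumptions C Cbar A b)
    (ε' ε'' : ℝ) (hε' : ε' ∈ interior (Eset C Cbar A b))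
    (hε'' : ε'' ∈ interior (Eset C Cbar A b))
    (hsp : SamePartition C Cbar A b ε' ε'')
    (ρ : ℝ) (hρ : ρ ∈ Set.Icc (0 : ℝ) 1) :
    vfun C Cbar A b (ρ * ε' + (1 - ρ) * ε'') =
      (ρ : EReal) * vfun C Cbar A b ε' + ((1 - ρ : ℝ) : EReal) * vfun C Cbar A b ε'' :=
  stmt2_general C Cbar A b hSA ε' ε'' hsp ρ hρ
end

section
/- Let ε ∈ int(E) with optimal partition (B, T, N), and let Q_B and Q_N be matrices whose columns form orthonormal bases of B and N respectively. Then every optimal solution (X̌, y̌, Š) ∈ P*(ε) × D*(ε) can be represented as X̌ = Q_B U_X̌ Q_B^T and Š = Q_N U_Š Q_N^T with uniquely determined positive semidefinite symmetric matrices U_X̌ (of size dim B) and U_Š (of size dim N). Moreover, if dim B > 0 and X̌ belongs to the relative interior of P*(ε), then U_X̌ is positive definite; and if dim N > 0 and (y̌, Š) belongs to the relative interior of D*(ε), then U_Š is positive definite. -/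
open Matrix Set

/-! A point `X` in the relative interior of a convex set of positive semidefinite matrices is a
proper convex combination of any other member `Y` with a third member, so `ker X ⊆ ker Y`.
Applied to a maximally complementary `X*`, every optimal `Y` (symmetric) then has its range in
`B = range X* = range Q_B`, whence `Y = Q_B (Q_Bᵀ Y Q_B) Q_Bᵀ`, and `Q_Bᵀ Q_B = 1` makes the
middle factor unique. If `Y` is itself in the relative interior, the kernels of `X*` and `Y`
coincide, and then `Q_Bᵀ Y Q_B` has trivial kernel. The dual side is identical with `Q_N`. -/

theorem exists_mem_openSegment_of_mem_intrinsicInterior {V : Type*} [AddCommGroup V]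
    [Module ℝ V] [TopologicalSpace V] [IsTopologicalAddGroup V] [ContinuousSMul ℝ V]
    {s : Set V} {x y : V} (hx : x ∈ intrinsicInterior ℝ s) (hy : y ∈ s) :
    ∃ z ∈ s, x ∈ openSegment ℝ y z := by
  obtain ⟨x, hx, rfl⟩ := hx
  let line : ℝ → affineSpan ℝ s := fun t =>
    ⟨AffineMap.lineMap y (x : V) t, AffineMap.lineMap_mem t (subset_affineSpan ℝ s hy) x.2⟩
  have hline : Continuous line := AffineMap.lineMap_continuous.subtype_mk _
  have hline_one : line 1 = x := Subtype.ext (AffineMap.lineMap_apply_one _ _)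
  -- the line from `y` through `x` stays in `s` a little beyond `x`
  have hnear : ∀ᶠ t in nhdsWithin 1 (Ioi 1),
      line t ∈ interior (((↑) : affineSpan ℝ s → V) ⁻¹' s) :=
    nhdsWithin_le_nhds <| hline.continuousAt.preimage_mem_nhds <|
      hline_one ▸ isOpen_interior.mem_nhds hx
  obtain ⟨t, hts, ht⟩ := (hnear.and self_mem_nhdsWithin).exists
  have ht0 : (0 : ℝ) < t := one_pos.trans ht
  refine ⟨line t, (interior_subset hts :), 1 - t⁻¹, t⁻¹, sub_pos.2 (inv_lt_one_of_one_lt₀ ht),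
    inv_pos.2 ht0, sub_add_cancel _ _, ?_⟩
  simp only [line, AffineMap.lineMap_apply_module]
  match_scalars <;> field_simp; ring

namespace Matrix

open scoped ComplexOrder

variable {ι κ : Type*} [Fintype ι]

theorem PosSemidef.ker_add_le_left {𝕜 : Type*} [RCLike 𝕜] {Y Z : Matrix ι ι 𝕜}
    (hY : Y.PosSemidef) (hZ : Z.PosSemidef) :
    LinearMap.ker (Y + Z).mulVecLin ≤ LinearMap.ker Y.mulVecLin := by
  intro v hv
  simp only [LinearMap.mem_ker, mulVecLin_apply] at hv ⊢
  have hsum : star v ⬝ᵥ Y *ᵥ v + star v ⬝ᵥ Z *ᵥ v = 0 := by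
    rw [← dotProduct_add, ← add_mulVec, hv, dotProduct_zero]
  rw [← hY.dotProduct_mulVec_zero_iff]
  exact ((add_eq_zero_iff_of_nonneg (hY.dotProduct_mulVec_nonneg v)
    (hZ.dotProduct_mulVec_nonneg v)).1 hsum).1

theorem ker_mulVecLin_le_of_mem_intrinsicInterior {V : Type*} [AddCommGroup V] [Module ℝ V]
    [TopologicalSpace V] [IsTopologicalAddGroup V] [ContinuousSMul ℝ V]
    (f : V →ₗ[ℝ] Matrix ι ι ℝ) {s : Set V} (hs : ∀ p ∈ s, (f p).PosSemidef) {x y : V}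
    (hx : x ∈ intrinsicInterior ℝ s) (hy : y ∈ s) :
    LinearMap.ker (f x).mulVecLin ≤ LinearMap.ker (f y).mulVecLin := by
  obtain ⟨z, hz, a, c, ha, hc, -, rfl⟩ := exists_mem_openSegment_of_mem_intrinsicInterior hx hy
  rw [map_add, map_smul, map_smul]
  calc LinearMap.ker (a • f y + c • f z).mulVecLin
      ≤ LinearMap.ker (a • f y).mulVecLin :=
        PosSemidef.ker_add_le_left ((hs y hy).smul ha.le) ((hs z hz).smul hc.le)
    _ = LinearMap.ker (f y).mulVecLin := by
        ext v
        simp only [LinearMap.mem_ker, mulVecLin_apply, smul_mulVec, smul_eq_zero, ha.ne',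
          false_or]

variable [Fintype κ] [DecidableEq κ] {Q : Matrix ι κ ℝ}

theorem mul_transpose_mul_eq_of_range_le {ι' : Type*} [Fintype ι'] {M : Matrix ι ι' ℝ}
    (hQ : Qᵀ * Q = 1) (hM : LinearMap.range M.mulVecLin ≤ LinearMap.range Q.mulVecLin) :
    Q * Qᵀ * M = M := by
  refine ext_iff_mulVec.2 fun v => ?_
  obtain ⟨u, hu⟩ := hM ⟨v, rfl⟩
  simp only [mulVecLin_apply] at hu
  rw [← mulVec_mulVec, ← hu, mulVec_mulVec, Matrix.mul_assoc, hQ, Matrix.mul_one]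

theorem eq_mul_mul_transpose_of_ker_le {X Y : Matrix ι ι ℝ} (hQ : Qᵀ * Q = 1)
    (hQX : LinearMap.range Q.mulVecLin = LinearMap.range X.mulVecLin) (hX : X.IsSymm)
    (hY : Y.IsSymm) (hXY : LinearMap.ker X.mulVecLin ≤ LinearMap.ker Y.mulVecLin) :
    Y = Q * (Qᵀ * Y * Q) * Qᵀ := by
  have hP : (Q * Qᵀ)ᵀ = Q * Qᵀ := by rw [transpose_mul, transpose_transpose]
  have hXP : X * (Q * Qᵀ) = X := by
    simpa only [transpose_mul, hP, hX.eq] using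
      congrArg transpose (mul_transpose_mul_eq_of_range_le hQ hQX.ge)
  -- `1 - Q Qᵀ` maps into `ker X ≤ ker Y`
  have hYP : Y * (Q * Qᵀ) = Y := by
    refine ext_iff_mulVec.2 fun v => (sub_eq_zero.1 ?_).symm
    have hv : v - (Q * Qᵀ) *ᵥ v ∈ LinearMap.ker X.mulVecLin := by
      simp only [LinearMap.mem_ker, mulVecLin_apply, mulVec_sub, mulVec_mulVec, hXP, sub_self]
    simpa only [LinearMap.mem_ker, mulVecLin_apply, mulVec_sub, mulVec_mulVec] using hXY hv
  have hPY : Q * Qᵀ * Y = Y := by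
    simpa only [transpose_mul, hP, hY.eq] using congrArg transpose hYP
  calc Y = Q * Qᵀ * Y * (Q * Qᵀ) := by rw [hPY, hYP]
    _ = Q * (Qᵀ * Y * Q) * Qᵀ := by simp only [Matrix.mul_assoc]

theorem transpose_mul_mul_mul_transpose_mul (hQ : Qᵀ * Q = 1) (U : Matrix κ κ ℝ) :
    Qᵀ * (Q * U * Qᵀ) * Q = U := by
  rw [← Matrix.mul_assoc, ← Matrix.mul_assoc, hQ, Matrix.one_mul, Matrix.mul_assoc, hQ,
    Matrix.mul_one]

theorem existsUnique_posSemidef_eq_mul_mul_transpose {X Y : Matrix ι ι ℝ} (hQ : Qᵀ * Q = 1)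
    (hQX : LinearMap.range Q.mulVecLin = LinearMap.range X.mulVecLin) (hX : X.IsSymm)
    (hY : Y.PosSemidef) (hXY : LinearMap.ker X.mulVecLin ≤ LinearMap.ker Y.mulVecLin) :
    ∃! U : Matrix κ κ ℝ, U.PosSemidef ∧ Y = Q * U * Qᵀ := by
  refine ⟨Qᵀ * Y * Q, ⟨?_, eq_mul_mul_transpose_of_ker_le hQ hQX hX ?_ hXY⟩, ?_⟩
  · simpa using hY.conjTranspose_mul_mul_same Q
  · exact isHermitian_iff_isSymm.1 hY.1
  · rintro U ⟨-, rfl⟩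
    exact (transpose_mul_mul_mul_transpose_mul hQ U).symm

theorem IsSymm.eq_zero_of_mem_range_of_mem_ker {X : Matrix ι ι ℝ} (hX : X.IsSymm) {v : ι → ℝ}
    (hrange : v ∈ LinearMap.range X.mulVecLin) (hker : v ∈ LinearMap.ker X.mulVecLin) :
    v = 0 := by
  obtain ⟨w, rfl⟩ := hrange
  simp only [LinearMap.mem_ker, mulVecLin_apply] at hker ⊢
  have hsymm : X *ᵥ w = w ᵥ* X := by rw [← vecMul_transpose, hX.eq]
  rw [← dotProduct_self_eq_zero]
  nth_rewrite 1 [hsymm]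
  rw [← dotProduct_mulVec, hker, dotProduct_zero]

theorem PosSemidef.posDef_of_ker_le {X Y : Matrix ι ι ℝ} {U : Matrix κ κ ℝ} (hQ : Qᵀ * Q = 1)
    (hQX : LinearMap.range Q.mulVecLin = LinearMap.range X.mulVecLin) (hX : X.IsSymm)
    (hU : U.PosSemidef) (hYU : Y = Q * U * Qᵀ)
    (hYX : LinearMap.ker Y.mulVecLin ≤ LinearMap.ker X.mulVecLin) : U.PosDef := by
  refine .of_dotProduct_mulVec_pos hU.1 fun u hu => (hU.dotProduct_mulVec_nonneg u).lt_of_ne' ?_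
  intro h0
  have hUu : U *ᵥ u = 0 := (hU.dotProduct_mulVec_zero_iff u).1 h0
  have hker : Q *ᵥ u ∈ LinearMap.ker X.mulVecLin := hYX <| by
    rw [LinearMap.mem_ker, mulVecLin_apply, hYU, mulVec_mulVec, Matrix.mul_assoc, hQ,
      Matrix.mul_one, ← mulVec_mulVec, hUu, mulVec_zero]
  have hQu : Q *ᵥ u = 0 := hX.eq_zero_of_mem_range_of_mem_ker (hQX ▸ ⟨u, rfl⟩) hker
  apply hu
  rw [← one_mulVec u, ← hQ, ← mulVec_mulVec, hQu, mulVec_zero]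

end Matrix

theorem stmt13_general {n m : ℕ} (C Cbar : Matrix (Fin n) (Fin n) ℝ)
    (A : Fin m → Matrix (Fin n) (Fin n) ℝ) (b : Fin m → ℝ)
    (ε : ℝ)
    (Xs Ss : Matrix (Fin n) (Fin n) ℝ) (ys : Fin m → ℝ)
    (hmc : MaxComp C Cbar A b ε Xs ys Ss)
    (kB kN : ℕ) (QB : Matrix (Fin n) (Fin kB) ℝ) (QN : Matrix (Fin n) (Fin kN) ℝ)
    (hQBorth : QBᵀ * QB = 1)
    (hQBrange : LinearMap.range QB.mulVecLin = LinearMap.range Xs.mulVecLin)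
    (hQNorth : QNᵀ * QN = 1)
    (hQNrange : LinearMap.range QN.mulVecLin = LinearMap.range Ss.mulVecLin)
    (Xc Sc : Matrix (Fin n) (Fin n) ℝ) (yc : Fin m → ℝ)
    (hoptP : Xc ∈ PrimalOpt C Cbar A b ε) (hoptD : (yc, Sc) ∈ DualOpt C Cbar A b ε) :
    (∃! UX : Matrix (Fin kB) (Fin kB) ℝ, UX.PosSemidef ∧ Xc = QB * UX * QBᵀ) ∧
      (∃! US : Matrix (Fin kN) (Fin kN) ℝ, US.PosSemidef ∧ Sc = QN * US * QNᵀ) ∧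
      (0 < kB → Xc ∈ intrinsicInterior ℝ (PrimalOpt C Cbar A b ε) →
        ∀ UX : Matrix (Fin kB) (Fin kB) ℝ, UX.PosSemidef → Xc = QB * UX * QBᵀ → UX.PosDef) ∧
      (0 < kN → (yc, Sc) ∈ intrinsicInterior ℝ (DualOpt C Cbar A b ε) →
        ∀ US : Matrix (Fin kN) (Fin kN) ℝ, US.PosSemidef → Sc = QN * US * QNᵀ → US.PosDef) := by
  have hXs : Xs ∈ PrimalOpt C Cbar A b ε := intrinsicInterior_subset hmc.1
  have hSs : (ys, Ss) ∈ DualOpt C Cbar A b ε := intrinsicInterior_subset hmc.2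
  have hPker : ∀ {X X'}, X ∈ intrinsicInterior ℝ (PrimalOpt C Cbar A b ε) →
      X' ∈ PrimalOpt C Cbar A b ε → LinearMap.ker X.mulVecLin ≤ LinearMap.ker X'.mulVecLin :=
    ker_mulVecLin_le_of_mem_intrinsicInterior LinearMap.id fun _ hX => hX.1.2.2
  have hDker : ∀ {p q : (Fin m → ℝ) × Matrix (Fin n) (Fin n) ℝ},
      p ∈ intrinsicInterior ℝ (DualOpt C Cbar A b ε) → q ∈ DualOpt C Cbar A b ε →
      LinearMap.ker p.2.mulVecLin ≤ LinearMap.ker q.2.mulVecLin := fun hp hq => by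
    simpa only [LinearMap.snd_apply] using ker_mulVecLin_le_of_mem_intrinsicInterior
      (LinearMap.snd ℝ _ _) (fun _ hq => hq.1.2.2) hp hq
  refine ⟨?_, ?_, fun _ hXc UX hUX hXcU => ?_, fun _ hSc US hUS hScU => ?_⟩
  · exact existsUnique_posSemidef_eq_mul_mul_transpose hQBorth hQBrange hXs.1.1 hoptP.1.2.2
      (hPker hmc.1 hoptP)
  · exact existsUnique_posSemidef_eq_mul_mul_transpose hQNorth hQNrange hSs.1.1 hoptD.1.2.2
      (hDker hmc.2 hoptD :)
  · exact hUX.posDef_of_ker_le hQBorth hQBrange hXs.1.1 hXcU (hPker hXc hXs)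
  · exact hUS.posDef_of_ker_le hQNorth hQNrange hSs.1.1 hScU (hDker hSc hSs :)

/-- representation of optimal solutions on the optimal partition
(Theorem 2.7 of de Klerk). -/
theorem stmt13 {n m : ℕ} (C Cbar : Matrix (Fin n) (Fin n) ℝ)
    (A : Fin m → Matrix (Fin n) (Fin n) ℝ) (b : Fin m → ℝ)
    (hSA : StandingAssumptions C Cbar A b)
    (ε : ℝ) (hε : ε ∈ interior (Eset C Cbar A b))
    (Xs Ss : Matrix (Fin n) (Fin n) ℝ) (ys : Fin m → ℝ)
    (hmc : MaxComp C Cbar A b ε Xs ys Ss)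
    (kB kN : ℕ) (QB : Matrix (Fin n) (Fin kB) ℝ) (QN : Matrix (Fin n) (Fin kN) ℝ)
    (hQBorth : QBᵀ * QB = 1)
    (hQBrange : LinearMap.range QB.mulVecLin = LinearMap.range Xs.mulVecLin)
    (hQNorth : QNᵀ * QN = 1)
    (hQNrange : LinearMap.range QN.mulVecLin = LinearMap.range Ss.mulVecLin)
    (Xc Sc : Matrix (Fin n) (Fin n) ℝ) (yc : Fin m → ℝ)
    (hoptP : Xc ∈ PrimalOpt C Cbar A b ε) (hoptD : (yc, Sc) ∈ DualOpt C Cbar A b ε) :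
    (∃! UX : Matrix (Fin kB) (Fin kB) ℝ, UX.PosSemidef ∧ Xc = QB * UX * QBᵀ) ∧
      (∃! US : Matrix (Fin kN) (Fin kN) ℝ, US.PosSemidef ∧ Sc = QN * US * QNᵀ) ∧
      (0 < kB → Xc ∈ intrinsicInterior ℝ (PrimalOpt C Cbar A b ε) →
        ∀ UX : Matrix (Fin kB) (Fin kB) ℝ, UX.PosSemidef → Xc = QB * UX * QBᵀ → UX.PosDef) ∧
      (0 < kN → (yc, Sc) ∈ intrinsicInterior ℝ (DualOpt C Cbar A b ε) →
        ∀ US : Matrix (Fin kN) (Fin kN) ℝ, US.PosSemidef → Sc = QN * US * QNᵀ → US.PosDef) :=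
  stmt13_general C Cbar A b ε Xs Ss ys hmc kB kN QB QN hQBorth hQBrange hQNorth hQNrange Xc Sc yc
    hoptP hoptD
end

section
/- Fix an optimal solution (X̌, y̌, Š) ∈ P*(0) × D*(0). Then there exist constants θ_1, θ_2 > 0, independent of μ, such that for every μ > 0 the central solution (X^μ, y^μ, S^μ) at ε = 0 satisfies: the Frobenius-norm distance from X^μ to the affine set {X ∈ S^n : ⟨A^i, X⟩ = b_i for i = 1,…,m and ⟨Š, X⟩ = 0} is at most θ_1 n μ, and the Frobenius-norm distance from S^μ to the affine set {S ∈ S^n : S = C − Σ_i y_i A^i for some y ∈ ℝ^m and ⟨X̌, S⟩ = 0} is at most θ_2 n μ. -/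
open Matrix Set

/-! Both bounds are Hoffman bounds for an affine subspace `K` cut by a hyperplane `ℓ = 0`. If `ℓ`
is not constant on `K`, moving `x ∈ K` along a direction `d` of `K` with `ℓ d ≠ 0` reaches the
section at distance `‖d‖ / |ℓ d| * |ℓ x|`; otherwise `ℓ` vanishes on `K` or the section is empty
(and `sInf ∅ = 0`). For `X^μ` the residual is `⟨Š, X^μ⟩`, for `S^μ` it is `⟨X̌, S^μ⟩`; weak duality
squeezes both between `0` and the duality gap `⟨X^μ, S^μ⟩ = n μ` of the central solution. -/

open scoped MatrixOrder ComplexOrder in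
theorem Matrix.PosSemidef.trace_mul_nonneg_s16 {ι 𝕜 : Type*} [Fintype ι] [RCLike 𝕜]
    {P Q : Matrix ι ι 𝕜} (hP : P.PosSemidef) (hQ : Q.PosSemidef) : 0 ≤ (P * Q).trace := by
  classical
  obtain ⟨B, rfl⟩ := CStarAlgebra.nonneg_iff_eq_star_mul_self.mp hP.nonneg
  rw [star_eq_conjTranspose, Matrix.mul_assoc, trace_mul_comm]
  exact (hQ.mul_mul_conjTranspose_same B).trace_nonneg

namespace AffineSubspace

variable {E : Type*} [SeminormedAddCommGroup E] [NormedSpace ℝ E]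
  {K : AffineSubspace ℝ E} {ℓ : E →ₗ[ℝ] ℝ} {x : E}

theorem sInf_norm_sub_le_of_mem_direction {d : E} (hd : d ∈ K.direction) (hℓd : ℓ d ≠ 0)
    (hx : x ∈ K) :
    sInf ((fun y => ‖x - y‖) '' {y | y ∈ K ∧ ℓ y = 0}) ≤ ‖d‖ / |ℓ d| * |ℓ x| := by
  set t := ℓ x / ℓ d
  have hmem : x - t • d ∈ {y | y ∈ K ∧ ℓ y = 0} := by
    refine ⟨?_, ?_⟩
    · simpa [sub_eq_neg_add] using vadd_mem_of_mem_direction (K.direction.smul_mem (-t) hd) hx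
    · simp [t, div_mul_cancel₀ _ hℓd]
  calc sInf ((fun y => ‖x - y‖) '' {y | y ∈ K ∧ ℓ y = 0})
      ≤ ‖x - (x - t • d)‖ :=
        csInf_le ⟨0, by rintro _ ⟨y, -, rfl⟩; exact norm_nonneg _⟩ ⟨_, hmem, rfl⟩
    _ = ‖d‖ / |ℓ d| * |ℓ x| := by
        rw [sub_sub_cancel, norm_smul, Real.norm_eq_abs, abs_div]; ring

theorem sInf_norm_sub_eq_zero_of_direction_le_ker (hℓ : ∀ d ∈ K.direction, ℓ d = 0)
    (hx : x ∈ K) : sInf ((fun y => ‖x - y‖) '' {y | y ∈ K ∧ ℓ y = 0}) = 0 := by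
  rcases Set.eq_empty_or_nonempty {y | y ∈ K ∧ ℓ y = 0} with hempty | ⟨y, hyK, hy⟩
  · rw [hempty, Set.image_empty, Real.sInf_empty]
  · have hxy : ℓ x = ℓ y := by
      simpa [sub_eq_zero] using hℓ _ (vsub_mem_direction hx hyK)
    refine le_antisymm ?_ (Real.sInf_nonneg fun _ ⟨_, _, h⟩ => h ▸ norm_nonneg _)
    calc sInf ((fun y => ‖x - y‖) '' {y | y ∈ K ∧ ℓ y = 0}) ≤ ‖x - x‖ :=
          csInf_le ⟨0, by rintro _ ⟨y, -, rfl⟩; exact norm_nonneg _⟩ ⟨x, ⟨hx, hxy ▸ hy⟩, rfl⟩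
      _ = 0 := by simp

theorem exists_hoffman_bound (K : AffineSubspace ℝ E) (ℓ : E →ₗ[ℝ] ℝ) :
    ∃ θ : ℝ, 0 < θ ∧
      ∀ x ∈ K, sInf ((fun y => ‖x - y‖) '' {y | y ∈ K ∧ ℓ y = 0}) ≤ θ * |ℓ x| := by
  by_cases h : ∃ d ∈ K.direction, ℓ d ≠ 0
  · obtain ⟨d, hd, hℓd⟩ := h
    refine ⟨‖d‖ / |ℓ d| + 1, by positivity, fun x hx => ?_⟩
    calc _ ≤ ‖d‖ / |ℓ d| * |ℓ x| := sInf_norm_sub_le_of_mem_direction hd hℓd hx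
      _ ≤ (‖d‖ / |ℓ d| + 1) * |ℓ x| := by gcongr; linarith
  · push Not at h
    exact ⟨1, one_pos, fun x hx => by
      rw [sInf_norm_sub_eq_zero_of_direction_le_ker h hx]; positivity⟩

end AffineSubspace

section Frobenius

attribute [local instance] Matrix.frobeniusSeminormedAddCommGroup Matrix.frobeniusNormedSpace

theorem frobNorm_eq_norm {α β : Type*} [Fintype α] [Fintype β] (M : Matrix α β ℝ) :
    frobNorm M = ‖M‖ := by
  simp [frobNorm, Matrix.frobenius_norm_def, Real.sqrt_eq_rpow]

theorem AffineSubspace.exists_hoffman_bound_frobNorm {α β : Type*} [Fintype α] [Fintype β]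
    (K : AffineSubspace ℝ (Matrix α β ℝ)) (ℓ : Matrix α β ℝ →ₗ[ℝ] ℝ) :
    ∃ θ : ℝ, 0 < θ ∧
      ∀ x ∈ K, sInf ((fun y => frobNorm (x - y)) '' {y | y ∈ K ∧ ℓ y = 0}) ≤ θ * |ℓ x| := by
  simpa only [frobNorm_eq_norm] using K.exists_hoffman_bound ℓ

end Frobenius

namespace Matrix

variable {ι κ : Type*}

def dualAffineSubspace (C : Matrix ι ι ℝ) (A : κ → Matrix ι ι ℝ) :
    AffineSubspace ℝ (Matrix ι ι ℝ) :=
  AffineSubspace.mk' C (Submodule.span ℝ (Set.range A))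

theorem mem_dualAffineSubspace [Fintype κ] {C S : Matrix ι ι ℝ} {A : κ → Matrix ι ι ℝ} :
    S ∈ dualAffineSubspace C A ↔ ∃ y : κ → ℝ, S = C - ∑ i, y i • A i := by
  rw [dualAffineSubspace, AffineSubspace.mem_mk', vsub_eq_sub,
    Submodule.mem_span_range_iff_exists_fun]
  constructor
  · rintro ⟨y, hy⟩
    exact ⟨-y, by simp [hy]⟩
  · rintro ⟨y, rfl⟩
    exact ⟨-y, by simp⟩

variable [Fintype ι]

def traceForm (M : Matrix ι ι ℝ) : Matrix ι ι ℝ →ₗ[ℝ] ℝ :=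
  traceLinearMap ι ℝ ℝ ∘ₗ LinearMap.mulLeft ℝ M

@[simp]
theorem traceForm_apply (M X : Matrix ι ι ℝ) : traceForm M X = (M * X).trace := rfl

def primalAffineSubspace (A : κ → Matrix ι ι ℝ) (b : κ → ℝ) :
    AffineSubspace ℝ (Matrix ι ι ℝ) where
  carrier := {X | X.IsSymm ∧ ∀ i, (A i * X).trace = b i}
  smul_vsub_vadd_mem' c X Y Z hX hY hZ :=
    ⟨((hX.1.sub hY.1).smul c).add hZ.1, fun i => by
      simp [Matrix.mul_add, Matrix.mul_sub, hX.2 i, hY.2 i, hZ.2 i]⟩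

theorem mem_primalAffineSubspace {A : κ → Matrix ι ι ℝ} {b : κ → ℝ} {X : Matrix ι ι ℝ} :
    X ∈ primalAffineSubspace A b ↔ X.IsSymm ∧ ∀ i, (A i * X).trace = b i :=
  Iff.rfl

theorem trace_sub_sum_smul_mul [Fintype κ] {C X : Matrix ι ι ℝ} {A : κ → Matrix ι ι ℝ}
    {b y : κ → ℝ} (hX : ∀ i, (A i * X).trace = b i) :
    ((C - ∑ i, y i • A i) * X).trace = (C * X).trace - ∑ i, b i * y i := by
  simp [Matrix.sub_mul, Finset.sum_mul, trace_sum, hX, mul_comm]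

end Matrix

section CentralPath

variable {n m : ℕ} {C Cbar Xμ Sμ : Matrix (Fin n) (Fin n) ℝ}
  {A : Fin m → Matrix (Fin n) (Fin n) ℝ} {b yμ : Fin m → ℝ} {μ : ℝ}

theorem DualFeasible.eq_sub_sum {y : Fin m → ℝ} {S : Matrix (Fin n) (Fin n) ℝ}
    (h : DualFeasible C Cbar A 0 y S) : S = C - ∑ i, y i • A i := by
  rw [eq_sub_iff_add_eq', h.2.1, zero_smul, add_zero]

theorem CentralSol.trace_mul (h : CentralSol C Cbar A b 0 μ Xμ yμ Sμ) :
    (Xμ * Sμ).trace = n * μ := by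
  rw [h.2.2, trace_smul, trace_one, Fintype.card_fin, smul_eq_mul, mul_comm]

theorem CentralSol.abs_trace_mul_le_of_dualOpt (h : CentralSol C Cbar A b 0 μ Xμ yμ Sμ)
    {yc : Fin m → ℝ} {Sc : Matrix (Fin n) (Fin n) ℝ} (hopt : (yc, Sc) ∈ DualOpt C Cbar A b 0) :
    |(Sc * Xμ).trace| ≤ n * μ := by
  have hgap : (Sc * Xμ).trace ≤ (Sμ * Xμ).trace := by
    have hSc : Sc = C - ∑ i, yc i • A i := DualFeasible.eq_sub_sum hopt.1
    rw [hSc, h.2.1.eq_sub_sum, trace_sub_sum_smul_mul h.1.2.1,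
      trace_sub_sum_smul_mul h.1.2.1]
    linarith [hopt.2 yμ Sμ h.2.1]
  rw [abs_of_nonneg (hopt.1.2.2.trace_mul_nonneg_s16 h.1.2.2), ← h.trace_mul, trace_mul_comm Xμ]
  exact hgap

theorem CentralSol.abs_trace_mul_le_of_primalOpt (h : CentralSol C Cbar A b 0 μ Xμ yμ Sμ)
    {Xc : Matrix (Fin n) (Fin n) ℝ} (hopt : Xc ∈ PrimalOpt C Cbar A b 0) :
    |(Xc * Sμ).trace| ≤ n * μ := by
  have hgap : (Sμ * Xc).trace ≤ (Sμ * Xμ).trace := by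
    rw [h.2.1.eq_sub_sum, trace_sub_sum_smul_mul h.1.2.1, trace_sub_sum_smul_mul hopt.1.2.1]
    simpa using hopt.2 Xμ h.1
  rw [abs_of_nonneg (hopt.1.2.2.trace_mul_nonneg_s16 h.2.1.2.2), ← h.trace_mul, trace_mul_comm Xc,
    trace_mul_comm Xμ]
  exact hgap

end CentralPath

theorem stmt16_general {n m : ℕ} (C Cbar : Matrix (Fin n) (Fin n) ℝ)
    (A : Fin m → Matrix (Fin n) (Fin n) ℝ) (b : Fin m → ℝ)
    (Xc Sc : Matrix (Fin n) (Fin n) ℝ) (yc : Fin m → ℝ)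
    (hoptP : Xc ∈ PrimalOpt C Cbar A b 0) (hoptD : (yc, Sc) ∈ DualOpt C Cbar A b 0) :
    ∃ θ₁ θ₂ : ℝ, 0 < θ₁ ∧ 0 < θ₂ ∧
      ∀ μ : ℝ, 0 < μ →
        ∀ (Xμ Sμ : Matrix (Fin n) (Fin n) ℝ) (yμ : Fin m → ℝ),
          CentralSol C Cbar A b 0 μ Xμ yμ Sμ →
          sInf ((fun X => frobNorm (Xμ - X)) ''
              {X : Matrix (Fin n) (Fin n) ℝ | X.IsSymm ∧ (∀ i, ((A i) * X).trace = b i) ∧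
                (Sc * X).trace = 0}) ≤ θ₁ * (n : ℝ) * μ ∧
            sInf ((fun S => frobNorm (Sμ - S)) ''
              {S : Matrix (Fin n) (Fin n) ℝ | (∃ y : Fin m → ℝ, S = C - ∑ i, y i • A i) ∧
                (Xc * S).trace = 0}) ≤ θ₂ * (n : ℝ) * μ := by
  obtain ⟨θ₁, hθ₁, hprimal⟩ :=
    (primalAffineSubspace A b).exists_hoffman_bound_frobNorm (traceForm Sc)
  obtain ⟨θ₂, hθ₂, hdual⟩ := (dualAffineSubspace C A).exists_hoffman_bound_frobNorm (traceForm Xc)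
  simp only [mem_primalAffineSubspace, mem_dualAffineSubspace, traceForm_apply, and_assoc]
    at hprimal hdual
  refine ⟨θ₁, θ₂, hθ₁, hθ₂, fun μ _ Xμ Sμ yμ hc => ⟨?_, ?_⟩⟩
  · calc _ ≤ θ₁ * |(Sc * Xμ).trace| := hprimal Xμ ⟨hc.1.1, hc.1.2.1⟩
      _ ≤ θ₁ * (n * μ) := by gcongr; exact hc.abs_trace_mul_le_of_dualOpt hoptD
      _ = θ₁ * n * μ := by ring
  · calc _ ≤ θ₂ * |(Xc * Sμ).trace| := hdual Sμ ⟨yμ, hc.2.1.eq_sub_sum⟩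
      _ ≤ θ₂ * (n * μ) := by gcongr; exact hc.abs_trace_mul_le_of_primalOpt hoptP
      _ = θ₂ * n * μ := by ring

/-- Hoffman-type bounds on the distance of central solutions to the optimal
affine subspaces determined by a fixed optimal solution. -/
theorem stmt16 {n m : ℕ} (C Cbar : Matrix (Fin n) (Fin n) ℝ)
    (A : Fin m → Matrix (Fin n) (Fin n) ℝ) (b : Fin m → ℝ)
    (hSA : StandingAssumptions C Cbar A b)
    (Xc Sc : Matrix (Fin n) (Fin n) ℝ) (yc : Fin m → ℝ)
    (hoptP : Xc ∈ PrimalOpt C Cbar A b 0) (hoptD : (yc, Sc) ∈ DualOpt C Cbar A b 0) :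
    ∃ θ₁ θ₂ : ℝ, 0 < θ₁ ∧ 0 < θ₂ ∧
      ∀ μ : ℝ, 0 < μ →
        ∀ (Xμ Sμ : Matrix (Fin n) (Fin n) ℝ) (yμ : Fin m → ℝ),
          CentralSol C Cbar A b 0 μ Xμ yμ Sμ →
          sInf ((fun X => frobNorm (Xμ - X)) ''
              {X : Matrix (Fin n) (Fin n) ℝ | X.IsSymm ∧ (∀ i, ((A i) * X).trace = b i) ∧
                (Sc * X).trace = 0}) ≤ θ₁ * (n : ℝ) * μ ∧
            sInf ((fun S => frobNorm (Sμ - S)) ''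
              {S : Matrix (Fin n) (Fin n) ℝ | (∃ y : Fin m → ℝ, S = C - ∑ i, y i • A i) ∧
                (Xc * S).trace = 0}) ≤ θ₂ * (n : ℝ) * μ :=
  stmt16_general C Cbar A b Xc Sc yc hoptP hoptD
end

section
/- Let x_0 ∈ ℝ^n and r > 0, and let G : ℝ^n → ℝ^n be continuously differentiable on the closed ball {x : ‖x − x_0‖ ≤ r} with derivative ∇G. Assume ∇G(x_0) is invertible and that ∇G is Lipschitz continuous with constant τ on this ball. Set θ = ‖∇G(x_0)^{-1}‖ and η = ‖∇G(x_0)^{-1} G(x_0)‖. If τ θ η ≤ 1/2 and (1 − sqrt(1 − 2 τ θ η))/(θ τ) ≤ r, then there exists x* with G(x*) = 0 and ‖x* − x_0‖ ≤ (1 − sqrt(1 − 2 τ θ η))/(θ τ). -/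
open Matrix Set

/-!
With `A = G'(x₀)⁻¹`, the chord iteration `x_{k+1} = x_k - A G(x_k)` is majorized by the scalar
iteration `t_{k+1} = η + θτ/2 t_k²`, `t_0 = 0`: `‖x_k - x₀‖ ≤ t_k` and
`‖x_{k+1} - x_k‖ ≤ t_{k+1} - t_k`. The key estimate is
`‖G p - G q - G'(x₀)(p - q)‖ ≤ τ (‖p - x₀‖ + ‖q - x₀‖)/2 ‖p - q‖`, obtained by integrating the
Lipschitz bound on `G'` along `[q, p]`; it bounds each chord step by exactly the next increment of `t`.
The `t_k` increase and stay below every `T` with `η + θτ/2 T² ≤ T`, in particular below the smaller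
root `(1 - √(1 - 2τθη))/(θτ)`, so `x_k` is Cauchy and converges to a zero of `G` within that radius.
-/

open Metric Filter Topology

noncomputable def kantorovichMajorant (a η : ℝ) : ℕ → ℝ
  | 0 => 0
  | k + 1 => η + a / 2 * kantorovichMajorant a η k ^ 2

namespace kantorovichMajorant

variable {a η : ℝ}

theorem nonneg (ha : 0 ≤ a) (hη : 0 ≤ η) : ∀ k, 0 ≤ kantorovichMajorant a η k
  | 0 => le_rfl
  | k + 1 => by rw [kantorovichMajorant]; positivity

theorem monotone (ha : 0 ≤ a) (hη : 0 ≤ η) : Monotone (kantorovichMajorant a η) := by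
  refine monotone_nat_of_le_succ fun k => ?_
  induction k with
  | zero => simpa [kantorovichMajorant] using hη
  | succ k ih =>
    simp only [kantorovichMajorant] at ih ⊢
    gcongr
    exact nonneg ha hη k

theorem le_of_add_mul_sq_le {T : ℝ} (ha : 0 ≤ a) (hη : 0 ≤ η) (hT : η + a / 2 * T ^ 2 ≤ T) :
    ∀ k, kantorovichMajorant a η k ≤ T
  | 0 => hη.trans (le_of_add_le_of_nonneg_left hT (by positivity))
  | k + 1 => calc
      η + a / 2 * kantorovichMajorant a η k ^ 2 ≤ η + a / 2 * T ^ 2 := by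
        gcongr
        · exact nonneg ha hη k
        · exact le_of_add_mul_sq_le ha hη hT k
      _ ≤ T := hT

theorem succ_succ_sub (k : ℕ) :
    kantorovichMajorant a η (k + 2) - kantorovichMajorant a η (k + 1) =
      a / 2 * (kantorovichMajorant a η (k + 1) + kantorovichMajorant a η k) *
        (kantorovichMajorant a η (k + 1) - kantorovichMajorant a η k) := by
  simp only [kantorovichMajorant]; ring

end kantorovichMajorant

theorem add_mul_sq_one_sub_sqrt_div_eq {a η : ℝ} (ha : 0 < a) (h : a * η ≤ 1 / 2) :
    η + a / 2 * ((1 - √(1 - 2 * a * η)) / a) ^ 2 = (1 - √(1 - 2 * a * η)) / a := by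
  have hs := Real.sq_sqrt (show 0 ≤ 1 - 2 * a * η by linarith)
  set s := √(1 - 2 * a * η)
  field_simp
  linear_combination hs

theorem norm_lineMap_sub_le {E : Type*} [NormedAddCommGroup E] [NormedSpace ℝ E]
    (x₀ p q : E) {u : ℝ} (hu : u ∈ Icc (0 : ℝ) 1) :
    ‖AffineMap.lineMap q p u - x₀‖ ≤ (1 - u) * ‖q - x₀‖ + u * ‖p - x₀‖ := by
  have h : AffineMap.lineMap q p u - x₀ = (1 - u) • (q - x₀) + u • (p - x₀) := by
    rw [AffineMap.lineMap_apply_module]; module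
  rw [h]
  refine (norm_add_le _ _).trans_eq ?_
  rw [norm_smul, norm_smul, Real.norm_of_nonneg (sub_nonneg.2 hu.2), Real.norm_of_nonneg hu.1]

theorem Convex.norm_image_sub_le_of_norm_hasFDerivWithin_le_mul_norm_sub
    {E F : Type*} [NormedAddCommGroup E] [NormedSpace ℝ E] [NormedAddCommGroup F]
    [NormedSpace ℝ F] {f : E → F} {f' : E → E →L[ℝ] F} {s : Set E} {x₀ p q : E} {τ : ℝ}
    (hs : Convex ℝ s) (hf : ∀ x ∈ s, HasFDerivWithinAt f (f' x) s x)
    (bound : ∀ x ∈ s, ‖f' x‖ ≤ τ * ‖x - x₀‖) (hτ : 0 ≤ τ) (hp : p ∈ s) (hq : q ∈ s) :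
    ‖f p - f q‖ ≤ τ * ((‖p - x₀‖ + ‖q - x₀‖) / 2) * ‖p - q‖ := by
  set γ : ℝ → E := (AffineMap.lineMap q p : ℝ → E)
  set a := ‖p - x₀‖
  set b := ‖q - x₀‖
  have segm : MapsTo γ (Icc 0 1) s := hs.mapsTo_lineMap hq hp
  have hD : ∀ u ∈ Icc (0 : ℝ) 1,
      HasDerivWithinAt (fun u => f (γ u) - f q) (f' (γ u) (p - q)) (Icc 0 1) u := fun u hu => by
    simpa using ((hf (γ u) (segm hu)).comp_hasDerivWithinAt u
      AffineMap.hasDerivWithinAt_lineMap segm).sub_const (f q)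
  -- `B` is a primitive of the bound `τ ((1 - u) b + u a) ‖p - q‖` on `‖(f ∘ γ)' u‖`
  set B : ℝ → ℝ := fun u => τ * ‖p - q‖ * (b * u + (a - b) * (u ^ 2 / 2))
  have hB : ∀ u, HasDerivAt B (τ * ‖p - q‖ * (b + (a - b) * u)) u := fun u => by
    have := (((hasDerivAt_id u).const_mul b).add
      (((hasDerivAt_pow 2 u).div_const 2).const_mul (a - b))).const_mul (τ * ‖p - q‖)
    exact this.congr_deriv (by norm_num)
  have bound' : ∀ u ∈ Ico (0 : ℝ) 1, ‖f' (γ u) (p - q)‖ ≤ τ * ‖p - q‖ * (b + (a - b) * u) :=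
    fun u hu => calc
      ‖f' (γ u) (p - q)‖ ≤ τ * ‖γ u - x₀‖ * ‖p - q‖ :=
        ContinuousLinearMap.le_of_opNorm_le _ (bound _ (segm (Ico_subset_Icc_self hu))) _
      _ ≤ τ * ((1 - u) * b + u * a) * ‖p - q‖ := by
        gcongr; exact norm_lineMap_sub_le x₀ p q (Ico_subset_Icc_self hu)
      _ = τ * ‖p - q‖ * (b + (a - b) * u) := by ring
  have := image_norm_le_of_norm_deriv_right_le_deriv_boundary
    (fun u hu => (hD u hu).continuousWithinAt)
    (fun u hu => (hD u (Ico_subset_Icc_self hu)).mono_of_mem_nhdsWithin (Icc_mem_nhdsGE_of_mem hu))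
    (by simp [B, γ]) hB bound' (right_mem_Icc.2 zero_le_one)
  simp only [γ, AffineMap.lineMap_apply_one, B] at this
  linarith

variable {E F : Type*} [NormedAddCommGroup E] [NormedSpace ℝ E] [NormedAddCommGroup F]
  [NormedSpace ℝ F]

noncomputable def chordIter (G : E → F) (A : F →L[ℝ] E) (x₀ : E) : ℕ → E
  | 0 => x₀
  | k + 1 => chordIter G A x₀ k - A (G (chordIter G A x₀ k))

namespace chordIter

variable {G : E → F} {A : F →L[ℝ] E} {x₀ : E}

theorem sub_succ (k : ℕ) :
    chordIter G A x₀ k - chordIter G A x₀ (k + 1) = A (G (chordIter G A x₀ k)) := by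
  simp [chordIter]

theorem succ_succ_sub {L : E →L[ℝ] F} (hAL : A.comp L = .id ℝ E) (k : ℕ) :
    chordIter G A x₀ (k + 2) - chordIter G A x₀ (k + 1) =
      -A (G (chordIter G A x₀ (k + 1)) - G (chordIter G A x₀ k) -
        L (chordIter G A x₀ (k + 1) - chordIter G A x₀ k)) := by
  have hL : A (L (chordIter G A x₀ (k + 1) - chordIter G A x₀ k)) =
      chordIter G A x₀ (k + 1) - chordIter G A x₀ k := by
    simpa using congr($hAL (chordIter G A x₀ (k + 1) - chordIter G A x₀ k))
  rw [map_sub, map_sub, hL, ← sub_succ, ← sub_succ]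
  abel

theorem norm_sub_le_kantorovichMajorant {L : E →L[ℝ] F} {r τ θ η T : ℝ}
    (hAL : A.comp L = .id ℝ E)
    (hG : ∀ p ∈ closedBall x₀ r, ∀ q ∈ closedBall x₀ r,
      ‖G p - G q - L (p - q)‖ ≤ τ * ((‖p - x₀‖ + ‖q - x₀‖) / 2) * ‖p - q‖)
    (hτ : 0 ≤ τ) (hθ : ‖A‖ ≤ θ) (hη : ‖A (G x₀)‖ ≤ η) (hT : η + θ * τ / 2 * T ^ 2 ≤ T)
    (hTr : T ≤ r) (k : ℕ) :
    ‖chordIter G A x₀ k - x₀‖ ≤ kantorovichMajorant (θ * τ) η k ∧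
      ‖chordIter G A x₀ (k + 1) - chordIter G A x₀ k‖ ≤
        kantorovichMajorant (θ * τ) η (k + 1) - kantorovichMajorant (θ * τ) η k := by
  set x := chordIter G A x₀
  set t := kantorovichMajorant (θ * τ) η
  have hθ₀ : 0 ≤ θ := (norm_nonneg A).trans hθ
  have hη₀ : 0 ≤ η := (norm_nonneg _).trans hη
  have ht := kantorovichMajorant.nonneg (mul_nonneg hθ₀ hτ) hη₀
  have htT := kantorovichMajorant.le_of_add_mul_sq_le (mul_nonneg hθ₀ hτ) hη₀ hT
  induction k with
  | zero =>
    refine ⟨by simp [x, t, chordIter, kantorovichMajorant], ?_⟩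
    rw [← norm_neg, neg_sub, sub_succ]
    simpa [x, t, chordIter, kantorovichMajorant] using hη
  | succ k ih =>
    obtain ⟨hxk, hstep⟩ := ih
    have hxk₁ : ‖x (k + 1) - x₀‖ ≤ t (k + 1) := by
      linarith [norm_sub_le_norm_sub_add_norm_sub (x (k + 1)) (x k) x₀]
    refine ⟨hxk₁, ?_⟩
    have mem : ∀ j, ‖x j - x₀‖ ≤ t j → x j ∈ closedBall x₀ r := fun j hj =>
      mem_closedBall_iff_norm.2 (hj.trans ((htT j).trans hTr))
    rw [succ_succ_sub hAL, norm_neg, kantorovichMajorant.succ_succ_sub]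
    calc _ ≤ θ * ‖G (x (k + 1)) - G (x k) - L (x (k + 1) - x k)‖ := A.le_of_opNorm_le hθ _
      _ ≤ θ * (τ * ((‖x (k + 1) - x₀‖ + ‖x k - x₀‖) / 2) * ‖x (k + 1) - x k‖) := by
        gcongr; exact hG _ (mem _ hxk₁) _ (mem _ hxk)
      _ ≤ θ * (τ * ((t (k + 1) + t k) / 2) * (t (k + 1) - t k)) := by
        have := ht k; have := ht (k + 1)
        gcongr
      _ = _ := by ring

end chordIter

theorem kantorovich_exists_zero [CompleteSpace E] {G : E → F} {G' : E → E →L[ℝ] F}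
    {A : F →L[ℝ] E} {x₀ : E} {r τ θ η T : ℝ}
    (hG : ∀ x ∈ closedBall x₀ r, HasFDerivAt G (G' x) x)
    (hG' : ∀ x ∈ closedBall x₀ r, ‖G' x - G' x₀‖ ≤ τ * ‖x - x₀‖)
    (hAG' : A.comp (G' x₀) = .id ℝ E) (hG'A : (G' x₀).comp A = .id ℝ F)
    (hτ : 0 ≤ τ) (hθ : ‖A‖ ≤ θ) (hη : ‖A (G x₀)‖ ≤ η) (hT : η + θ * τ / 2 * T ^ 2 ≤ T)
    (hTr : T ≤ r) :
    ∃ xs ∈ closedBall x₀ T, G xs = 0 := by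
  set x := chordIter G A x₀
  set t := kantorovichMajorant (θ * τ) η
  have hθ₀ : 0 ≤ θ := (norm_nonneg A).trans hθ
  have hη₀ : 0 ≤ η := (norm_nonneg _).trans hη
  have htT := kantorovichMajorant.le_of_add_mul_sq_le (mul_nonneg hθ₀ hτ) hη₀ hT
  have hlin : ∀ p ∈ closedBall x₀ r, ∀ q ∈ closedBall x₀ r,
      ‖G p - G q - G' x₀ (p - q)‖ ≤ τ * ((‖p - x₀‖ + ‖q - x₀‖) / 2) * ‖p - q‖ := by
    intro p hp q hq
    have := (convex_closedBall x₀ r).norm_image_sub_le_of_norm_hasFDerivWithin_le_mul_norm_sub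
      (f := fun x => G x - G' x₀ x)
      (fun x hx => ((hG x hx).sub (G' x₀).hasFDerivAt).hasFDerivWithinAt) hG' hτ hp hq
    rwa [sub_sub_sub_comm, ← map_sub] at this
  have hest := chordIter.norm_sub_le_kantorovichMajorant hAG' hlin hτ hθ hη hT hTr
  have hcauchy : CauchySeq x := by
    refine cauchySeq_of_dist_le_of_summable (fun k => t (k + 1) - t k)
      (fun k => by rw [dist_comm, dist_eq_norm]; exact (hest k).2) ?_
    refine summable_of_sum_range_le (fun k => sub_nonneg.2 ?_) (fun k => ?_) (c := T)
    · exact kantorovichMajorant.monotone (mul_nonneg hθ₀ hτ) hη₀ k.le_succ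
    · rw [Finset.sum_range_sub]; simpa [t, kantorovichMajorant] using htT k
  obtain ⟨xs, hx⟩ := cauchySeq_tendsto_of_complete hcauchy
  have hxs : xs ∈ closedBall x₀ T := isClosed_closedBall.mem_of_tendsto hx
    (.of_forall fun k => mem_closedBall_iff_norm.2 ((hest k).1.trans (htT k)))
  refine ⟨xs, hxs, ?_⟩
  have hAG : Tendsto (fun k => A (G (x k))) atTop (𝓝 (A (G xs))) :=
    (A.continuous.tendsto _).comp
      ((hG xs (closedBall_subset_closedBall hTr hxs)).continuousAt.tendsto.comp hx)
  have hsteps : Tendsto (fun k => A (G (x k))) atTop (𝓝 0) := by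
    simpa [x, chordIter.sub_succ] using hx.sub (hx.comp (tendsto_add_atTop_nat 1))
  simpa [tendsto_nhds_unique hAG hsteps] using congr($hG'A (G xs)).symm

theorem stmt18_general {n : ℕ} (x₀ : EuclideanSpace ℝ (Fin n)) (r : ℝ)
    (G : EuclideanSpace ℝ (Fin n) → EuclideanSpace ℝ (Fin n))
    (G' : EuclideanSpace ℝ (Fin n) → (EuclideanSpace ℝ (Fin n) →L[ℝ] EuclideanSpace ℝ (Fin n)))
    (hdiff : ∀ x ∈ Metric.closedBall x₀ r, HasFDerivAt G (G' x) x)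
    (Ginv : EuclideanSpace ℝ (Fin n) →L[ℝ] EuclideanSpace ℝ (Fin n))
    (hinv₁ : Ginv.comp (G' x₀) = ContinuousLinearMap.id ℝ (EuclideanSpace ℝ (Fin n)))
    (hinv₂ : (G' x₀).comp Ginv = ContinuousLinearMap.id ℝ (EuclideanSpace ℝ (Fin n)))
    (τ : ℝ) (hτ : 0 < τ)
    (hlip : ∀ x ∈ Metric.closedBall x₀ r, ∀ y ∈ Metric.closedBall x₀ r,
      ‖G' x - G' y‖ ≤ τ * ‖x - y‖)
    (θ η : ℝ) (hθ : θ = ‖Ginv‖) (hη : η = ‖Ginv (G x₀)‖)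
    (hcond₁ : τ * θ * η ≤ 1 / 2)
    (hcond₂ : (1 - Real.sqrt (1 - 2 * τ * θ * η)) / (θ * τ) ≤ r) :
    ∃ xs : EuclideanSpace ℝ (Fin n), G xs = 0 ∧
      ‖xs - x₀‖ ≤ (1 - Real.sqrt (1 - 2 * τ * θ * η)) / (θ * τ) := by
  set T := (1 - √(1 - 2 * τ * θ * η)) / (θ * τ) with hT_def
  have hθ₀ : 0 ≤ θ := hθ ▸ norm_nonneg _
  have hη₀ : 0 ≤ η := hη ▸ norm_nonneg _
  have hT : η + θ * τ / 2 * T ^ 2 ≤ T := by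
    rcases hθ₀.eq_or_lt with hθ₀ | hθ₀
    -- `θ = 0` forces `Ginv = 0`, hence `η = 0`, while `T = 0` by division by zero
    · simp [T, hη, ← hθ₀, norm_eq_zero.1 (hθ ▸ hθ₀).symm]
    · rw [hT_def, show 2 * τ * θ * η = 2 * (θ * τ) * η by ring]
      exact (add_mul_sq_one_sub_sqrt_div_eq (mul_pos hθ₀ hτ) (by linarith)).le
  have hr : 0 ≤ r := ((by positivity : 0 ≤ η + θ * τ / 2 * T ^ 2).trans hT).trans hcond₂
  obtain ⟨xs, hxs, hGxs⟩ := kantorovich_exists_zero hdiff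
    (fun x hx => hlip x hx x₀ (mem_closedBall_self hr)) hinv₁ hinv₂ hτ.le hθ.ge hη.ge hT hcond₂
  exact ⟨xs, hGxs, mem_closedBall_iff_norm.1 hxs⟩

/-- the Kantorovich theorem (Theorem 5.3.1 in Dennis–Schnabel). -/
theorem stmt18 {n : ℕ} (x₀ : EuclideanSpace ℝ (Fin n)) (r : ℝ) (hr : 0 < r)
    (G : EuclideanSpace ℝ (Fin n) → EuclideanSpace ℝ (Fin n))
    (G' : EuclideanSpace ℝ (Fin n) → (EuclideanSpace ℝ (Fin n) →L[ℝ] EuclideanSpace ℝ (Fin n)))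
    (hdiff : ∀ x ∈ Metric.closedBall x₀ r, HasFDerivAt G (G' x) x)
    (Ginv : EuclideanSpace ℝ (Fin n) →L[ℝ] EuclideanSpace ℝ (Fin n))
    (hinv₁ : Ginv.comp (G' x₀) = ContinuousLinearMap.id ℝ (EuclideanSpace ℝ (Fin n)))
    (hinv₂ : (G' x₀).comp Ginv = ContinuousLinearMap.id ℝ (EuclideanSpace ℝ (Fin n)))
    (τ : ℝ) (hτ : 0 < τ)
    (hlip : ∀ x ∈ Metric.closedBall x₀ r, ∀ y ∈ Metric.closedBall x₀ r,
      ‖G' x - G' y‖ ≤ τ * ‖x - y‖)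
    (θ η : ℝ) (hθ : θ = ‖Ginv‖) (hη : η = ‖Ginv (G x₀)‖)
    (hcond₁ : τ * θ * η ≤ 1 / 2)
    (hcond₂ : (1 - Real.sqrt (1 - 2 * τ * θ * η)) / (θ * τ) ≤ r) :
    ∃ xs : EuclideanSpace ℝ (Fin n), G xs = 0 ∧
      ‖xs - x₀‖ ≤ (1 - Real.sqrt (1 - 2 * τ * θ * η)) / (θ * τ) :=
  stmt18_general x₀ r G G' hdiff Ginv hinv₁ hinv₂ τ hτ hlip θ η hθ hη hcond₁ hcond₂
end
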